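/- Let m be a non-negative integer and 1 ≤ j ≤ 2m+1. For all τ, v ∈ ℂ with Im τ > 0, a_j(τ, v+1) − a_j(τ, v) = (i/√(2m+2)) (−iτ)^{−1/2} Σ_{k=1}^{2m+2} e^{−πijk/(m+1)} e^{2πi(m+1)(v + k/(2m+2))²/τ}, where (−iτ)^{−1/2} is the principal branch of the square root. -/

import Mathlib

open Complex MeasureTheory

namespace KW

local notation "π" => (Real.pi : ℂ)

/-- Zwegers' function `h_{m+1;2m+2-j}`, in the integral form (5.9) of Kac–Wakimoto. -/
noncomputable def aFun (m j : ℕ) (τ v : ℂ) : ℂ :=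
  I * ∫ x : ℝ,
      exp (2 * π * I * ((m : ℂ) + 1) * (x : ℂ) ^ 2 * τ - 4 * π * ((m : ℂ) + 1) * (x : ℂ) * v) /
        (1 - exp (2 * π * ((x : ℂ) + I * (j : ℂ) / (2 * (m : ℂ) + 2))))

/-!
Put `F = exp (-2π (x + i j / (2m+2)))`, so that the denominator of the integrand is `1 - F⁻¹`.
Replacing `v` by `v + 1` multiplies the Gaussian numerator by `e^{-2π(2m+2)x} = F^{2m+2}`
(as `e^{-2πij} = 1`), so the difference of the integrands is the numerator times
`(F^{2m+2} - 1) / (1 - F⁻¹) = ∑_{k=1}^{2m+2} F^k`: the denominator cancels. Each `F^k` times the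
numerator is a root of unity times the numerator at `v + k/(2m+2)`, a Gaussian whose integral is
explicit. Since `2m+2 ∤ j`, the denominator is bounded away from `0` on `ℝ`, which makes the
integrals absolutely convergent.
-/

lemma _root_.Complex.ofReal_mul_cpow {r : ℝ} (hr : 0 < r) {z : ℂ} (hz : z ≠ 0) (w : ℂ) :
    ((r : ℂ) * z) ^ w = (r : ℂ) ^ w * z ^ w := by
  have hr' : (r : ℂ) ≠ 0 := ofReal_ne_zero.mpr hr.ne'
  rw [cpow_def_of_ne_zero (mul_ne_zero hr' hz), log_ofReal_mul hr hz, add_mul, exp_add,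
    cpow_def_of_ne_zero hr', cpow_def_of_ne_zero hz, ← ofReal_log hr.le]

noncomputable def gaussianKernel (M τ u : ℂ) (x : ℝ) : ℂ :=
  exp (2 * π * I * M * (x : ℂ) ^ 2 * τ - 4 * π * M * (x : ℂ) * u)

section Gaussian

variable {M : ℝ} {τ : ℂ}

lemma gaussianKernel_eq_cexp_quadratic (u : ℂ) (x : ℝ) :
    gaussianKernel M τ u x = exp (2 * π * I * M * τ * x ^ 2 + (-4 * π * M * u) * x + 0) := by
  unfold gaussianKernel; ring_nf

lemma re_two_pi_I_mul_lt_zero (hM : 0 < M) (hτ : 0 < τ.im) : (2 * π * I * M * τ).re < 0 := by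
  have : (2 * π * I * M * τ).re = -(2 * Real.pi * M * τ.im) := by simp
  rw [this, neg_lt_zero]; positivity

lemma integrable_gaussianKernel (hM : 0 < M) (hτ : 0 < τ.im) (u : ℂ) :
    Integrable (gaussianKernel M τ u) := by
  rw [funext (gaussianKernel_eq_cexp_quadratic u)]
  exact integrable_cexp_quadratic' (re_two_pi_I_mul_lt_zero hM hτ) _ _

lemma integral_gaussianKernel (hM : 0 < M) (hτ : 0 < τ.im) (u : ℂ) :
    ∫ x : ℝ, gaussianKernel M τ u x =
      ((Real.sqrt (2 * M) : ℂ))⁻¹ * (-(I * τ)) ^ (-(1 / 2 : ℂ)) *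
        exp (2 * π * I * M * u ^ 2 / τ) := by
  rw [funext (gaussianKernel_eq_cexp_quadratic u),
    integral_cexp_quadratic (re_two_pi_I_mul_lt_zero hM hτ)]
  have hτ0 : τ ≠ 0 := by rintro rfl; simp at hτ
  have hw : -(I * τ) ≠ 0 := by simpa using hτ0
  have harg : (-(I * τ)).arg ≠ Real.pi := by
    rw [Ne, arg_eq_pi_iff]; rintro ⟨h, -⟩; simp at h; linarith
  have hquot : π / -(2 * π * I * M * τ) = (((2 * M)⁻¹ : ℝ) : ℂ) * (-(I * τ))⁻¹ := by
    have : (π : ℂ) ≠ 0 := ofReal_ne_zero.mpr Real.pi_ne_zero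
    have : (M : ℂ) ≠ 0 := ofReal_ne_zero.mpr hM.ne'
    push_cast; field_simp
  have hsqrt : (((2 * M)⁻¹ : ℝ) : ℂ) ^ (1 / 2 : ℂ) = ((Real.sqrt (2 * M) : ℂ))⁻¹ := by
    rw [show (1 / 2 : ℂ) = ((1 / 2 : ℝ) : ℂ) by norm_num, ← ofReal_cpow (by positivity),
      Real.inv_rpow (by positivity), Real.sqrt_eq_rpow, ofReal_inv]
  rw [hquot, ofReal_mul_cpow (by positivity) (inv_ne_zero hw), hsqrt, inv_cpow _ _ harg,
    ← cpow_neg]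
  congr 2
  field_simp
  linear_combination (-4 * π * M * u ^ 2) * I_sq

end Gaussian

lemma _root_.Complex.exists_pos_le_norm_one_sub_exp {θ : ℝ} (hθ : Real.cos θ ≠ 1) :
    ∃ δ > 0, ∀ x : ℝ, δ ≤ ‖1 - exp (x + θ * I)‖ := by
  set c := max (Real.cos θ) 0
  have hc0 : 0 ≤ c := le_max_right _ _
  have hc1 : c < 1 := max_lt (lt_of_le_of_ne (Real.cos_le_one θ) hθ) one_pos
  refine ⟨Real.sqrt (1 - c ^ 2), Real.sqrt_pos.mpr (by nlinarith), fun x => ?_⟩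
  rw [Real.sqrt_le_left (norm_nonneg _)]
  have ht := Real.exp_pos x
  have hnorm : ‖1 - exp (x + θ * I)‖ ^ 2 = (Real.exp x - Real.cos θ) ^ 2 + Real.sin θ ^ 2 := by
    rw [Complex.sq_norm, normSq_apply]
    simp [exp_re, exp_im]
    linear_combination (Real.exp x ^ 2 - 1) * Real.sin_sq_add_cos_sq θ
  rw [hnorm]
  -- `δ² = sin² θ` if `cos θ > 0`; otherwise `δ = 1`, since then `(eˣ - cos θ)² ≥ cos² θ`
  rcases le_or_gt (Real.cos θ) 0 with h | h
  · rw [show c = 0 from max_eq_right h]; nlinarith [Real.sin_sq_add_cos_sq θ]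
  · rw [show c = Real.cos θ from max_eq_left h.le]; nlinarith [Real.sin_sq_add_cos_sq θ]

lemma _root_.pow_sub_one_eq_one_sub_inv_mul_sum_Icc {K : Type*} [Field K] {x : K} (hx : x ≠ 0)
    (n : ℕ) :
    x ^ n - 1 = (1 - x⁻¹) * ∑ k ∈ Finset.Icc 1 n, x ^ k := by
  have h := geom_sum_Ico_mul x (Nat.le_add_left 1 n)
  rw [← Finset.Ico_add_one_right_eq_Icc]
  field_simp
  linear_combination -h

lemma _root_.MeasureTheory.Integrable.div_of_le_norm {α 𝕜 : Type*} [MeasurableSpace α]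
    {μ : Measure α} [NormedField 𝕜] {f g : α → 𝕜} (hf : Integrable f μ)
    (hg : AEStronglyMeasurable g μ) {δ : ℝ} (hδ : 0 < δ) (hgδ : ∀ x, δ ≤ ‖g x‖) :
    Integrable (fun x => f x / g x) μ := by
  simp_rw [div_eq_mul_inv]
  exact hf.mul_bdd hg.fun_inv₀ (ae_of_all _ fun x => by
    rw [norm_inv]; exact inv_anti₀ hδ (hgδ x))

noncomputable def aDenom (m j : ℕ) (x : ℝ) : ℂ :=
  1 - exp (2 * π * ((x : ℂ) + I * (j : ℂ) / (2 * (m : ℂ) + 2)))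

lemma aFun_eq_integral (m j : ℕ) (τ v : ℂ) :
    aFun m j τ v = I * ∫ x : ℝ, gaussianKernel ((m : ℂ) + 1) τ v x / aDenom m j x :=
  rfl

lemma continuous_aDenom (m j : ℕ) : Continuous (aDenom m j) := by
  unfold aDenom; fun_prop

lemma exists_pos_le_norm_aDenom {m j : ℕ} (hj1 : 1 ≤ j) (hj2 : j ≤ 2 * m + 1) :
    ∃ δ > 0, ∀ x : ℝ, δ ≤ ‖aDenom m j x‖ := by
  set θ : ℝ := 2 * Real.pi * j / (2 * m + 2)
  have hθ : Real.cos θ ≠ 1 := by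
    have hj0 : (0 : ℝ) < j := by exact_mod_cast hj1
    have hjm : (j : ℝ) < 2 * m + 2 := by exact_mod_cast (by omega : j < 2 * m + 2)
    have hθ0 : 0 < θ := by positivity
    have hθ2π : θ < 2 * Real.pi := by
      rw [div_lt_iff₀ (by positivity)]; nlinarith [Real.pi_pos]
    rw [Ne, Real.cos_eq_one_iff_of_lt_of_lt (by linarith) hθ2π]
    exact hθ0.ne'
  obtain ⟨δ, hδ, hle⟩ := exists_pos_le_norm_one_sub_exp hθ
  refine ⟨δ, hδ, fun x => (hle (2 * Real.pi * x)).trans_eq ?_⟩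
  unfold aDenom
  congr 3
  simp only [θ]; push_cast; ring

lemma integrable_gaussianKernel_natCast_add_one (m : ℕ) {τ : ℂ} (hτ : 0 < τ.im) (u : ℂ) :
    Integrable (gaussianKernel ((m : ℂ) + 1) τ u) := by
  have := integrable_gaussianKernel (M := (m : ℝ) + 1) (by positivity) hτ u
  rwa [ofReal_add, ofReal_natCast, ofReal_one] at this

lemma integrable_gaussianKernel_div_aDenom {m j : ℕ} (hj1 : 1 ≤ j) (hj2 : j ≤ 2 * m + 1)
    {τ : ℂ} (hτ : 0 < τ.im) (u : ℂ) :
    Integrable fun x : ℝ => gaussianKernel ((m : ℂ) + 1) τ u x / aDenom m j x := by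
  obtain ⟨δ, hδ, hle⟩ := exists_pos_le_norm_aDenom hj1 hj2
  exact (integrable_gaussianKernel_natCast_add_one m hτ u).div_of_le_norm
    (continuous_aDenom m j).aestronglyMeasurable hδ hle

lemma gaussianKernel_add_one_sub (m j : ℕ) (τ v : ℂ) (x : ℝ) :
    gaussianKernel ((m : ℂ) + 1) τ (v + 1) x - gaussianKernel ((m : ℂ) + 1) τ v x =
      aDenom m j x * ∑ k ∈ Finset.Icc 1 (2 * m + 2),
        exp (-(π * I * (j : ℂ) * (k : ℂ) / ((m : ℂ) + 1))) *
          gaussianKernel ((m : ℂ) + 1) τ (v + (k : ℂ) / (2 * (m : ℂ) + 2)) x := by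
  set F := exp (-(2 * π * ((x : ℂ) + I * (j : ℂ) / (2 * (m : ℂ) + 2))))
  have hm : (2 * (m : ℂ) + 2) ≠ 0 := by norm_cast
  have hD : aDenom m j x = 1 - F⁻¹ := by simp only [aDenom, F, exp_neg, inv_inv]
  have hterm : ∀ k : ℕ, exp (-(π * I * (j : ℂ) * (k : ℂ) / ((m : ℂ) + 1))) *
      gaussianKernel ((m : ℂ) + 1) τ (v + (k : ℂ) / (2 * (m : ℂ) + 2)) x =
        gaussianKernel ((m : ℂ) + 1) τ v x * F ^ k := by
    intro k
    simp only [gaussianKernel, F, ← exp_nat_mul, ← exp_add]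
    congr 1
    field_simp
    ring
  -- `F ^ (2m+2) = e^{-2π(2m+2)x} e^{-2πij}` and `e^{-2πij} = 1`
  have hshift : gaussianKernel ((m : ℂ) + 1) τ (v + 1) x =
      gaussianKernel ((m : ℂ) + 1) τ v x * F ^ (2 * m + 2) := by
    simp only [gaussianKernel, F, ← exp_nat_mul, ← exp_add]
    refine exp_eq_exp_iff_exists_int.mpr ⟨j, ?_⟩
    push_cast
    field_simp
    ring
  rw [Finset.sum_congr rfl fun k _ => hterm k, ← Finset.mul_sum, hshift, hD, mul_left_comm,
    ← pow_sub_one_eq_one_sub_inv_mul_sum_Icc (exp_ne_zero _)]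
  ring

/-- Equation (5.10) of Kac–Wakimoto. -/
theorem statement4 (m j : ℕ) (hj1 : 1 ≤ j) (hj2 : j ≤ 2 * m + 1) (τ v : ℂ) (hτ : 0 < τ.im) :
    aFun m j τ (v + 1) - aFun m j τ v =
      (I / (Real.sqrt (2 * (m : ℝ) + 2) : ℂ)) * (-(I * τ)) ^ (-(1 / 2 : ℂ)) *
        ∑ k ∈ Finset.Icc 1 (2 * m + 2),
          exp (-(π * I * (j : ℂ) * (k : ℂ) / ((m : ℂ) + 1))) *
            exp (2 * π * I * ((m : ℂ) + 1) * (v + (k : ℂ) / (2 * (m : ℂ) + 2)) ^ 2 / τ) := by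
  obtain ⟨δ, hδ, hle⟩ := exists_pos_le_norm_aDenom hj1 hj2
  have hD : ∀ x, aDenom m j x ≠ 0 := fun x => norm_pos_iff.mp (hδ.trans_le (hle x))
  have hint := integrable_gaussianKernel_div_aDenom hj1 hj2 hτ
  have hgauss := integral_gaussianKernel (M := (m : ℝ) + 1) (by positivity) hτ
  simp only [ofReal_add, ofReal_natCast, ofReal_one, show 2 * ((m : ℝ) + 1) = 2 * m + 2 by ring]
    at hgauss
  rw [aFun_eq_integral, aFun_eq_integral, ← mul_sub, ← integral_sub (hint _) (hint _)]
  simp_rw [← sub_div, gaussianKernel_add_one_sub m j, mul_div_cancel_left₀ _ (hD _)]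
  rw [integral_finsetSum _ fun k _ =>
      (integrable_gaussianKernel_natCast_add_one m hτ _).const_mul _, Finset.mul_sum, Finset.mul_sum]
  refine Finset.sum_congr rfl fun k _ => ?_
  rw [integral_const_mul, hgauss]
  ring

end KW
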